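/- For every z = (z_1, ẑ) ∈ E_{2m} there exists an automorphism F of E_{2m} such that F(z) = (q, 0, …, 0), where q = |z_1| (1 − |ẑ|²)^{−1/(2m)} and 0 ≤ q < 1. -/

import Mathlib

noncomputable section

/-- The pseudo-egg `E_{2m} ⊆ ℂ^n` with `n = k + 1`, written as `ℂ × ℂ^k`. -/
def E2m (k : ℕ) (m : ℝ) : Set (ℂ × (Fin k → ℂ)) :=
  {z | ‖z.1‖ ^ (2 * m) + ∑ j, ‖z.2 j‖ ^ 2 < 1}

/-- An automorphism of a domain `D`: a holomorphic bijection of `D` onto itself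
whose inverse is holomorphic. -/
def IsAutomorphismOf {X : Type*} [NormedAddCommGroup X] [NormedSpace ℂ X]
    (D : Set X) (F : X → X) : Prop :=
  DifferentiableOn ℂ F D ∧ Set.BijOn F D D ∧
    ∃ G : X → X, DifferentiableOn ℂ G D ∧
      (∀ z ∈ D, G (F z) = z) ∧ (∀ w ∈ D, F (G w) = w)

/-!
Two kinds of automorphisms suffice. The maps `(z₁, ẑ) ↦ (u z₁, U ẑ)` with `|u| = 1` and `U`
unitary preserve `E_{2m}` and move `z` to `(|z₁|, |ẑ|, 0, …, 0)`. For real `|r| < 1` put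
`c = √(1 - r²) / (1 - r w₀)`; the map
`(z₁, w₀, w') ↦ (c^{1/m} z₁, (w₀ - r) / (1 - r w₀), c w')`
multiplies both `|z₁|^{2m}` and `|w'|²` by `|c|²`, while
`1 - |(w₀ - r) / (1 - r w₀)|² = |c|² (1 - |w₀|²)`. Hence it preserves `E_{2m}`, its inverse is the
same map for `-r`, and for `r = |ẑ|` it sends `(|z₁|, r, 0)` to `(|z₁| (1 - r²)^{-1/(2m)}, 0)`.
-/

open Complex

section Automorphism

variable {X : Type*} [NormedAddCommGroup X] [NormedSpace ℂ X] {D : Set X} {F G : X → X}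

theorem IsAutomorphismOf.of_invOn (hF : DifferentiableOn ℂ F D) (hG : DifferentiableOn ℂ G D)
    (hFD : Set.MapsTo F D D) (hGD : Set.MapsTo G D D) (hGF : ∀ z ∈ D, G (F z) = z)
    (hFG : ∀ w ∈ D, F (G w) = w) : IsAutomorphismOf D F :=
  ⟨hF, Set.InvOn.bijOn ⟨hGF, hFG⟩ hFD hGD, G, hG, hGF, hFG⟩

theorem IsAutomorphismOf.comp (hG : IsAutomorphismOf D G) (hF : IsAutomorphismOf D F) :
    IsAutomorphismOf D (G ∘ F) := by
  obtain ⟨hGd, hGb, G', hG'd, hG'G, hGG'⟩ := hG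
  obtain ⟨hFd, hFb, F', hF'd, hF'F, hFF'⟩ := hF
  have hG'D : Set.MapsTo G' D D := (Set.BijOn.symm ⟨hGG', hG'G⟩ hGb).mapsTo
  have hF'D : Set.MapsTo F' D D := (Set.BijOn.symm ⟨hFF', hF'F⟩ hFb).mapsTo
  exact .of_invOn (hGd.comp hFd hFb.mapsTo) (hF'd.comp hG'd hG'D) (hGb.mapsTo.comp hFb.mapsTo)
    (hF'D.comp hG'D) (fun z hz => by simp [hG'G _ (hFb.mapsTo hz), hF'F z hz])
    (fun w hw => by simp [hFF' _ (hG'D hw), hGG' w hw])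

theorem isAutomorphismOf_continuousLinearEquiv (e : X ≃L[ℂ] X) (he : ∀ x, e x ∈ D ↔ x ∈ D) :
    IsAutomorphismOf D e :=
  .of_invOn e.differentiable.differentiableOn e.symm.differentiable.differentiableOn
    (fun x hx => (he x).2 hx) (fun x hx => (he _).1 (by simpa using hx))
    (fun x _ => e.symm_apply_apply x) (fun x _ => e.apply_symm_apply x)

end Automorphism

section Unitary

variable {𝕜 ι : Type*} [RCLike 𝕜] [Fintype ι]

theorem exists_linearIsometryEquiv_apply_eq_single [DecidableEq ι] (v : EuclideanSpace 𝕜 ι)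
    (i : ι) :
    ∃ U : EuclideanSpace 𝕜 ι ≃ₗᵢ[𝕜] EuclideanSpace 𝕜 ι,
      U v = EuclideanSpace.single i (‖v‖ : 𝕜) := by
  rcases eq_or_ne v 0 with rfl | hv
  · exact ⟨LinearIsometryEquiv.refl 𝕜 _, by ext; simp⟩
  set u := (‖v‖⁻¹ : 𝕜) • v
  have hu : ‖u‖ = 1 := by simp [u, norm_smul, hv]
  have hu' : Orthonormal 𝕜 (({i} : Set ι).domRestrict fun _ => u) :=
    orthonormal_subsingleton_iff.2 fun _ => hu
  obtain ⟨b, hb⟩ := hu'.exists_orthonormalBasis_extension_of_card_eq (by simp)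
  refine ⟨b.repr, ?_⟩
  have hv : v = (‖v‖ : 𝕜) • b i := by
    rw [hb i rfl, smul_smul, mul_inv_cancel₀ (by simpa using hv), one_smul]
  conv_lhs => rw [hv, map_smul, b.repr_self]
  ext j
  by_cases hj : j = i <;> simp [hj, RCLike.real_smul_eq_coe_mul]

/-- `U` acting on `ι → 𝕜`, the carrier of `E2m`, whose own norm is the sup norm. -/
def LinearIsometryEquiv.piConj (U : EuclideanSpace 𝕜 ι ≃ₗᵢ[𝕜] EuclideanSpace 𝕜 ι) :
    (ι → 𝕜) ≃L[𝕜] (ι → 𝕜) :=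
  (EuclideanSpace.equiv ι 𝕜).symm.trans
    (U.toContinuousLinearEquiv.trans (EuclideanSpace.equiv ι 𝕜))

theorem LinearIsometryEquiv.sum_norm_piConj_sq (U : EuclideanSpace 𝕜 ι ≃ₗᵢ[𝕜] EuclideanSpace 𝕜 ι)
    (w : ι → 𝕜) : ∑ j, ‖U.piConj w j‖ ^ 2 = ∑ j, ‖w j‖ ^ 2 := by
  have := EuclideanSpace.norm_sq_eq (U (WithLp.toLp 2 w))
  rw [U.norm_map, EuclideanSpace.norm_sq_eq] at this
  exact this.symm

end Unitary

section DiskMoebius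

variable {r : ℝ} {w : ℂ}

def diskMoebius (r : ℝ) (w : ℂ) : ℂ := (w - r) / (1 - r * w)

def diskMoebiusFactor (r : ℝ) (w : ℂ) : ℂ := √(1 - r ^ 2) / (1 - r * w)

theorem one_sub_sq_pos (hr : |r| < 1) : 0 < 1 - r ^ 2 :=
  sub_pos.2 ((sq_lt_one_iff_abs_lt_one r).2 hr)

theorem re_one_sub_ofReal_mul_pos (hr : |r| < 1) (hw : ‖w‖ < 1) : 0 < (1 - r * w).re := by
  have hrw : |r * w.re| < 1 := by
    rw [abs_mul]
    exact mul_lt_one_of_nonneg_of_lt_one_left (abs_nonneg r) hr ((abs_re_le_norm w).trans hw.le)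
  simpa using (le_abs_self _).trans_lt hrw

theorem one_sub_ofReal_mul_ne_zero (hr : |r| < 1) (hw : ‖w‖ < 1) : 1 - r * w ≠ 0 := fun h => by
  simpa [h] using re_one_sub_ofReal_mul_pos hr hw

theorem diskMoebiusFactor_mem_slitPlane (hr : |r| < 1) (hw : ‖w‖ < 1) :
    diskMoebiusFactor r w ∈ slitPlane := by
  refine mem_slitPlane_iff.2 (Or.inl ?_)
  rw [diskMoebiusFactor, div_re, ofReal_re, ofReal_im, zero_mul, zero_div, add_zero]
  exact div_pos (mul_pos (Real.sqrt_pos.2 (one_sub_sq_pos hr)) (re_one_sub_ofReal_mul_pos hr hw))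
    (normSq_pos.2 (one_sub_ofReal_mul_ne_zero hr hw))

theorem norm_diskMoebiusFactor :
    ‖diskMoebiusFactor r w‖ = √(1 - r ^ 2) / ‖1 - r * w‖ := by
  rw [diskMoebiusFactor, norm_div, norm_real, Real.norm_of_nonneg (Real.sqrt_nonneg _)]

theorem norm_diskMoebius_sq (hr : |r| < 1) (hw : ‖w‖ < 1) :
    ‖diskMoebius r w‖ ^ 2 = 1 - ‖diskMoebiusFactor r w‖ ^ 2 * (1 - ‖w‖ ^ 2) := by
  have hd := pow_pos (norm_pos_iff.2 (one_sub_ofReal_mul_ne_zero hr hw)) 2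
  have key : ‖1 - r * w‖ ^ 2 - ‖w - r‖ ^ 2 = (1 - r ^ 2) * (1 - ‖w‖ ^ 2) := by
    simp only [Complex.sq_norm, normSq_apply, sub_re, sub_im, one_re, one_im, mul_re, mul_im,
      ofReal_re, ofReal_im]
    ring
  rw [norm_diskMoebiusFactor, diskMoebius, norm_div, div_pow, div_pow,
    Real.sq_sqrt (one_sub_sq_pos hr).le, eq_sub_iff_add_eq, div_mul_eq_mul_div, ← add_div,
    div_eq_one_iff_eq hd.ne']
  linarith

theorem one_sub_neg_mul_diskMoebius (hr : |r| < 1) (hw : ‖w‖ < 1) :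
    1 - ((-r : ℝ) : ℂ) * diskMoebius r w = (1 - r ^ 2) / (1 - r * w) := by
  have hd := one_sub_ofReal_mul_ne_zero hr hw
  rw [diskMoebius, eq_div_iff hd]
  push_cast
  rw [neg_mul, sub_neg_eq_add, add_mul, mul_assoc, div_mul_cancel₀ _ hd]
  ring

theorem diskMoebius_neg_diskMoebius (hr : |r| < 1) (hw : ‖w‖ < 1) :
    diskMoebius (-r) (diskMoebius r w) = w := by
  have hd := one_sub_ofReal_mul_ne_zero hr hw
  have hs : (1 : ℂ) - r ^ 2 ≠ 0 := by exact_mod_cast (one_sub_sq_pos hr).ne'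
  rw [diskMoebius, one_sub_neg_mul_diskMoebius hr hw, diskMoebius]
  set d := 1 - r * w with hd_def
  push_cast
  field_simp
  rw [hd_def]
  ring

theorem diskMoebiusFactor_neg_diskMoebius (hr : |r| < 1) (hw : ‖w‖ < 1) :
    diskMoebiusFactor (-r) (diskMoebius r w) = (diskMoebiusFactor r w)⁻¹ := by
  have hd := one_sub_ofReal_mul_ne_zero hr hw
  have hs : (√(1 - r ^ 2) : ℂ) ≠ 0 := by exact_mod_cast (Real.sqrt_pos.2 (one_sub_sq_pos hr)).ne'
  have hs2 : (1 : ℂ) - r ^ 2 = (√(1 - r ^ 2) : ℂ) ^ 2 := by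
    exact_mod_cast (Real.sq_sqrt (one_sub_sq_pos hr).le).symm
  rw [diskMoebiusFactor, one_sub_neg_mul_diskMoebius hr hw, neg_sq, diskMoebiusFactor, hs2]
  field_simp

theorem differentiableAt_diskMoebius (hr : |r| < 1) (hw : ‖w‖ < 1) :
    DifferentiableAt ℂ (diskMoebius r) w :=
  (differentiableAt_id.sub_const _).div ((differentiableAt_id.const_mul _).const_sub 1)
    (one_sub_ofReal_mul_ne_zero hr hw)

theorem differentiableAt_diskMoebiusFactor (hr : |r| < 1) (hw : ‖w‖ < 1) :
    DifferentiableAt ℂ (diskMoebiusFactor r) w :=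
  (differentiableAt_const _).div ((differentiableAt_id.const_mul _).const_sub 1)
    (one_sub_ofReal_mul_ne_zero hr hw)

end DiskMoebius

theorem Complex.exists_norm_eq_one_mul_eq_norm (a : ℂ) :
    ∃ u : ℂˣ, ‖(u : ℂ)‖ = 1 ∧ a * u = ‖a‖ := by
  refine ⟨Units.mk0 (exp (-arg a * I)) (exp_ne_zero _), ?_, ?_⟩
  · exact_mod_cast norm_exp_ofReal_mul_I (-arg a)
  · nth_rewrite 1 [← norm_mul_exp_arg_mul_I a]
    rw [Units.val_mk0, mul_assoc, ← exp_add, neg_mul, add_neg_cancel, exp_zero, mul_one]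

namespace E2m

variable {k : ℕ} {m : ℝ}

theorem prodCongr_mem_iff {u : ℂˣ} (hu : ‖(u : ℂ)‖ = 1)
    (U : EuclideanSpace ℂ (Fin k) ≃ₗᵢ[ℂ] EuclideanSpace ℂ (Fin k)) (p : ℂ × (Fin k → ℂ)) :
    (ContinuousLinearEquiv.unitsEquivAut ℂ u).prodCongr U.piConj p ∈ E2m k m ↔ p ∈ E2m k m := by
  simp only [E2m, Set.mem_ofPred_eq, ContinuousLinearEquiv.prodCongr_apply,
    ContinuousLinearEquiv.unitsEquivAut_apply, norm_mul, hu, mul_one, U.sum_norm_piConj_sq]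

theorem sum_norm_sq_lt_one {z : ℂ × (Fin k → ℂ)} (hz : z ∈ E2m k m) :
    ∑ j, ‖z.2 j‖ ^ 2 < 1 := by
  have := Real.rpow_nonneg (norm_nonneg z.1) (2 * m)
  linarith [show ‖z.1‖ ^ (2 * m) + ∑ j, ‖z.2 j‖ ^ 2 < 1 from hz]

theorem norm_fst_mul_rpow_lt_one (hm : 0 < m) {z : ℂ × (Fin k → ℂ)}
    (hz : z ∈ E2m k m) : ‖z.1‖ * (1 - ∑ j, ‖z.2 j‖ ^ 2) ^ (-(1 / (2 * m))) < 1 := by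
  have h1 := sub_pos.2 (sum_norm_sq_lt_one hz)
  rw [Real.rpow_neg h1.le, ← div_eq_mul_inv, div_lt_one (by positivity), one_div,
    Real.lt_rpow_inv_iff_of_pos (norm_nonneg _) h1.le (by positivity)]
  linarith [show ‖z.1‖ ^ (2 * m) + ∑ j, ‖z.2 j‖ ^ 2 < 1 from hz]

section Moebius

variable {r : ℝ} {p : ℂ × (Fin (k + 1) → ℂ)}

def moebius (m r : ℝ) (p : ℂ × (Fin (k + 1) → ℂ)) : ℂ × (Fin (k + 1) → ℂ) :=
  (p.1 * diskMoebiusFactor r (p.2 0) ^ ((m⁻¹ : ℝ) : ℂ),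
    Fin.cons (diskMoebius r (p.2 0)) fun j => diskMoebiusFactor r (p.2 0) * p.2 j.succ)

theorem mem_succ_iff : p ∈ E2m (k + 1) m ↔
    ‖p.1‖ ^ (2 * m) + (‖p.2 0‖ ^ 2 + ∑ j : Fin k, ‖p.2 j.succ‖ ^ 2) < 1 := by
  rw [← Fin.sum_univ_succ (f := fun j => ‖p.2 j‖ ^ 2)]
  rfl

theorem norm_snd_zero_lt_one (hp : p ∈ E2m (k + 1) m) : ‖p.2 0‖ < 1 := by
  have h1 := Real.rpow_nonneg (norm_nonneg p.1) (2 * m)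
  have h2 : 0 ≤ ∑ j : Fin k, ‖p.2 j.succ‖ ^ 2 := by positivity
  nlinarith [mem_succ_iff.1 hp, norm_nonneg (p.2 0)]

theorem moebius_mem (hm : m ≠ 0) (hr : |r| < 1) (hp : p ∈ E2m (k + 1) m) :
    moebius m r p ∈ E2m (k + 1) m := by
  have hw := norm_snd_zero_lt_one hp
  set c := ‖diskMoebiusFactor r (p.2 0)‖
  have hc : 0 < c := norm_pos_iff.2 (slitPlane_ne_zero (diskMoebiusFactor_mem_slitPlane hr hw))
  have hfst : ‖(moebius m r p).1‖ ^ (2 * m) = ‖p.1‖ ^ (2 * m) * c ^ 2 := by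
    rw [moebius, norm_mul, norm_cpow_real, Real.mul_rpow (norm_nonneg _) (by positivity),
      ← Real.rpow_mul hc.le, show m⁻¹ * (2 * m) = 2 by field_simp, Real.rpow_two]
  have hsnd : ∑ j, ‖(moebius m r p).2 j‖ ^ 2 =
      1 - c ^ 2 * (1 - ‖p.2 0‖ ^ 2) + c ^ 2 * ∑ j : Fin k, ‖p.2 j.succ‖ ^ 2 := by
    simp only [moebius, Fin.sum_univ_succ, Fin.cons_zero, Fin.cons_succ, norm_mul, mul_pow,
      ← Finset.mul_sum, norm_diskMoebius_sq hr hw]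
    rfl
  have hp' := mem_succ_iff.1 hp
  show ‖(moebius m r p).1‖ ^ (2 * m) + ∑ j, ‖(moebius m r p).2 j‖ ^ 2 < 1
  rw [hfst, hsnd]
  nlinarith [pow_pos hc 2]

theorem moebius_neg_moebius (hr : |r| < 1) (hw : ‖p.2 0‖ < 1) :
    moebius m (-r) (moebius m r p) = p := by
  have hc := diskMoebiusFactor_mem_slitPlane hr hw
  have hcm : diskMoebiusFactor r (p.2 0) ^ ((m⁻¹ : ℝ) : ℂ) ≠ 0 :=
    cpow_ne_zero_iff.2 (Or.inl (slitPlane_ne_zero hc))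
  simp only [moebius, Fin.cons_zero, Fin.cons_succ, diskMoebius_neg_diskMoebius hr hw,
    diskMoebiusFactor_neg_diskMoebius hr hw, inv_mul_cancel_left₀ (slitPlane_ne_zero hc),
    inv_cpow _ _ (slitPlane_arg_ne_pi hc), mul_inv_cancel_right₀ hcm]
  exact Prod.ext rfl (Fin.cons_self_tail p.2)

theorem differentiableOn_moebius (hr : |r| < 1) :
    DifferentiableOn ℂ (moebius m r) (E2m (k + 1) m) := by
  intro p hp
  have hw := norm_snd_zero_lt_one hp
  have hw0 : DifferentiableAt ℂ (fun q : ℂ × (Fin (k + 1) → ℂ) => q.2 0) p := by fun_prop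
  have hc := (differentiableAt_diskMoebiusFactor hr hw).comp p hw0
  refine (DifferentiableAt.prodMk ?_ ?_).differentiableWithinAt
  · exact differentiableAt_fst.mul (hc.cpow_const (diskMoebiusFactor_mem_slitPlane hr hw))
  · refine differentiableAt_pi.2 (Fin.cases ?_ fun j => ?_)
    · simp only [Fin.cons_zero]
      exact (differentiableAt_diskMoebius hr hw).comp p hw0
    · simp only [Fin.cons_succ]
      exact hc.mul (by fun_prop)

theorem isAutomorphismOf_moebius (hm : m ≠ 0) (hr : |r| < 1) :
    IsAutomorphismOf (E2m (k + 1) m) (moebius m r) := by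
  have hr' : |-r| < 1 := by rwa [abs_neg]
  refine .of_invOn (differentiableOn_moebius hr) (differentiableOn_moebius hr')
    (fun p hp => moebius_mem hm hr hp) (fun p hp => moebius_mem hm hr' hp)
    (fun p hp => moebius_neg_moebius hr (norm_snd_zero_lt_one hp)) fun p hp => ?_
  simpa using moebius_neg_moebius (m := m) hr' (norm_snd_zero_lt_one hp)

theorem moebius_apply_single (hr : |r| < 1) (a : ℂ) :
    moebius (k := k) m r (a, Pi.single 0 (r : ℂ)) =
      (a * ((1 - r ^ 2) ^ (-(1 / (2 * m))) : ℝ), 0) := by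
  have hs := one_sub_sq_pos hr
  have hfac : diskMoebiusFactor r r = ((1 - r ^ 2) ^ (-(1 / 2) : ℝ) : ℝ) := by
    have hsq : ((1 : ℂ) - r * r) = (√(1 - r ^ 2) : ℂ) * √(1 - r ^ 2) := by
      have h : √(1 - r ^ 2) * √(1 - r ^ 2) = 1 - r * r := by rw [Real.mul_self_sqrt hs.le]; ring
      exact_mod_cast h.symm
    have hne : (√(1 - r ^ 2) : ℂ) ≠ 0 := by exact_mod_cast (Real.sqrt_pos.2 hs).ne'
    rw [Real.rpow_neg hs.le, ← Real.sqrt_eq_rpow, diskMoebiusFactor, hsq, ofReal_inv,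
      div_mul_cancel_left₀ hne]
  have hpow : (((1 - r ^ 2) ^ (-(1 / 2) : ℝ) : ℝ) : ℂ) ^ ((m⁻¹ : ℝ) : ℂ) =
      ((1 - r ^ 2) ^ (-(1 / (2 * m))) : ℝ) := by
    rw [← ofReal_cpow (Real.rpow_nonneg hs.le _), ← Real.rpow_mul hs.le]
    ring_nf
  simp only [moebius, Pi.single_eq_same, hfac, hpow, diskMoebius, sub_self, zero_div,
    Pi.single_eq_of_ne (Fin.succ_ne_zero _), mul_zero]
  exact Prod.ext rfl Matrix.cons_zero_zero

end Moebius

end E2m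

open E2m in
theorem statement4_general (k : ℕ) (hk : 1 ≤ k) (m : ℝ) (hm0 : 0 < m)
    (z : ℂ × (Fin k → ℂ)) (hz : z ∈ E2m k m) :
    ∃ F : (ℂ × (Fin k → ℂ)) → (ℂ × (Fin k → ℂ)),
      IsAutomorphismOf (E2m k m) F ∧
      F z = (((‖z.1‖ * (1 - ∑ j, ‖z.2 j‖ ^ 2) ^ (-(1 / (2 * m))) : ℝ) : ℂ),
        0) ∧
      0 ≤ ‖z.1‖ * (1 - ∑ j, ‖z.2 j‖ ^ 2) ^ (-(1 / (2 * m))) ∧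
      ‖z.1‖ * (1 - ∑ j, ‖z.2 j‖ ^ 2) ^ (-(1 / (2 * m))) < 1 := by
  obtain ⟨k, rfl⟩ : ∃ k', k = k' + 1 := ⟨k - 1, by omega⟩
  have hS := sum_norm_sq_lt_one hz
  set r := √(∑ j, ‖z.2 j‖ ^ 2)
  have hr : |r| < 1 := by
    rw [abs_of_nonneg (Real.sqrt_nonneg _), Real.sqrt_lt' one_pos, one_pow]
    exact hS
  obtain ⟨u, hu, hzu⟩ := exists_norm_eq_one_mul_eq_norm z.1
  obtain ⟨U, hU⟩ := exists_linearIsometryEquiv_apply_eq_single (WithLp.toLp 2 z.2) 0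
  set L := (ContinuousLinearEquiv.unitsEquivAut ℂ u).prodCongr U.piConj
  have hLz : L z = ((‖z.1‖ : ℂ), Pi.single 0 (r : ℂ)) := by
    rw [EuclideanSpace.norm_eq] at hU
    exact Prod.ext hzu (congrArg WithLp.ofLp hU)
  refine ⟨moebius m r ∘ L, (isAutomorphismOf_moebius hm0.ne' hr).comp
    (isAutomorphismOf_continuousLinearEquiv L (prodCongr_mem_iff hu U)), ?_,
    mul_nonneg (norm_nonneg _) (Real.rpow_nonneg (sub_pos.2 hS).le _),
    norm_fst_mul_rpow_lt_one hm0 hz⟩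
  rw [Function.comp_apply, hLz, moebius_apply_single hr, Real.sq_sqrt (by positivity)]
  push_cast
  rfl

/-- For every `z = (z₁, ẑ) ∈ E_{2m}` there is an automorphism `F` of `E_{2m}` with
`F(z) = (q, 0, …, 0)`, where `q = |z₁|(1−|ẑ|²)^{−1/(2m)}` and `0 ≤ q < 1`. -/
theorem statement4 (k : ℕ) (hk : 1 ≤ k) (m : ℝ) (hm0 : 0 < m) (hm : m < 1 / 2)
    (z : ℂ × (Fin k → ℂ)) (hz : z ∈ E2m k m) :
    ∃ F : (ℂ × (Fin k → ℂ)) → (ℂ × (Fin k → ℂ)),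
      IsAutomorphismOf (E2m k m) F ∧
      F z = (((‖z.1‖ * (1 - ∑ j, ‖z.2 j‖ ^ 2) ^ (-(1 / (2 * m))) : ℝ) : ℂ),
        0) ∧
      0 ≤ ‖z.1‖ * (1 - ∑ j, ‖z.2 j‖ ^ 2) ^ (-(1 / (2 * m))) ∧
      ‖z.1‖ * (1 - ∑ j, ‖z.2 j‖ ^ 2) ^ (-(1 / (2 * m))) < 1 :=
  statement4_general k hk m hm0 z hz
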